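/- arXiv:1305.6635 — 4 statements merged into one kernel-verified Lean document; each statement's English description precedes it below -/
import Mathlib

section
/- Let T, T' be independent exponentially distributed random variables with mean σ > 0, and let G, G' be independent identically distributed nonnegative random variables, independent of T, T'. Then for any t ∈ ℝ and τ > 0 with τ ≠ σ, E[exp(-|t + T + G - T' - G'|/τ)] = (τ/(τ+σ)) · (τ·E[exp(-|G'-G-t|/τ)] - σ·E[exp(-|G'-G-t|/σ)])/(τ-σ). -/
open MeasureTheory ProbabilityTheory Real Set

/-!
Conditioning on `G - G'`, which is independent of `(T, T')`, reduces the claim to the identity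
`E exp(-|u + T - T'|/τ) = τ/(τ+σ) · (τ e^{-|u|/τ} - σ e^{-|u|/σ})/(τ-σ)` for a fixed real `u`.
Exchanging `T` and `T'` turns `u` into `-u`, so it suffices to take `u ≥ 0`. Then `s = u + T ≥ 0`,
and splitting the exponential density of `T'` at `s` gives `E exp(-|s - T'|/τ)` as a combination of
`e^{-s/σ}` and `e^{-s/τ}`, which is integrated once more against the density of `T`.
-/

lemma integrable_exp_neg_abs_div {α : Type*} [MeasurableSpace α] {μ : Measure α}
    [IsFiniteMeasure μ] {X : α → ℝ} (hX : AEMeasurable X μ) {r : ℝ} (hr : 0 ≤ r) :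
    Integrable (fun a => exp (-|X a| / r)) μ := by
  refine .of_bound (by fun_prop) 1 (.of_forall fun a => ?_)
  rw [norm_of_nonneg (exp_pos _).le, exp_le_one_iff]
  exact div_nonpos_of_nonpos_of_nonneg (neg_nonpos.2 (abs_nonneg _)) hr

lemma integral_exp_mul {c : ℝ} (hc : c ≠ 0) (a b : ℝ) :
    ∫ x in a..b, exp (c * x) = (exp (c * b) - exp (c * a)) / c := by
  rw [intervalIntegral.integral_comp_mul_left (fun x => exp x) hc, integral_exp, smul_eq_mul,
    inv_mul_eq_div]

lemma integral_expMeasure_eq_setIntegral {r : ℝ} (hr : 0 < r) (g : ℝ → ℝ) :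
    ∫ x, g x ∂expMeasure r = ∫ x in Ioi 0, r * exp (-(r * x)) * g x := by
  rw [← integral_Ici_eq_integral_Ioi, ← integral_indicator measurableSet_Ici, expMeasure,
    gammaMeasure, integral_withDensity_eq_integral_toReal_smul (f := gammaPDF 1 r)
      (measurable_gammaPDFReal 1 r).ennreal_ofReal (.of_forall fun _ => ENNReal.ofReal_lt_top)]
  congr with x
  rcases lt_or_ge x 0 with hx | hx
  · simp [gammaPDF_of_neg hx, hx.not_ge]
  · have : 0 ≤ r * exp (-(r * x)) := by positivity
    simp [gammaPDF_of_nonneg hx, hx, ENNReal.toReal_ofReal this]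

lemma integral_exp_neg_abs_sub_div_expMeasure_of_nonneg {σ τ s : ℝ} (hσ : 0 < σ) (hτ : 0 < τ)
    (hne : τ ≠ σ) (hs : 0 ≤ s) :
    ∫ y, exp (-|s - y| / τ) ∂expMeasure σ⁻¹
      = τ * (2 * σ * exp (-(s / σ)) - (σ + τ) * exp (-(s / τ))) / (σ ^ 2 - τ ^ 2) := by
  set f := fun y => σ⁻¹ * exp (-(σ⁻¹ * y)) * exp (-|s - y| / τ)
  have hnear : EqOn f (fun y => σ⁻¹ * exp (-(s / τ)) * exp ((τ⁻¹ - σ⁻¹) * y)) (Iic s) := by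
    intro y hy
    simp only [f, abs_of_nonneg (sub_nonneg.2 (mem_Iic.1 hy)), mul_assoc, ← exp_add]
    congr 2
    field_simp
    ring
  have hfar : EqOn f (fun y => σ⁻¹ * exp (s / τ) * exp (-(σ⁻¹ + τ⁻¹) * y)) (Ioi s) := by
    intro y hy
    simp only [f, abs_of_neg (sub_neg.2 (mem_Ioi.1 hy)), mul_assoc, ← exp_add]
    congr 2
    field_simp
    ring
  have hc : τ⁻¹ - σ⁻¹ ≠ 0 := sub_ne_zero.2 (inv_injective.ne hne)
  have hb : -(σ⁻¹ + τ⁻¹) < 0 := by simp only [neg_lt_zero]; positivity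
  rw [integral_expMeasure_eq_setIntegral (inv_pos.2 hσ), ← Ioc_union_Ioi_eq_Ioi hs,
    setIntegral_union (Ioc_disjoint_Ioi le_rfl) measurableSet_Ioi
      (by fun_prop : Continuous f).integrableOn_Ioc
      (IntegrableOn.congr_fun ((integrableOn_exp_mul_Ioi hb s).const_mul _) hfar.symm
        measurableSet_Ioi),
    setIntegral_congr_fun measurableSet_Ioc (hnear.mono Ioc_subset_Iic_self),
    setIntegral_congr_fun measurableSet_Ioi hfar, integral_const_mul, integral_const_mul,
    ← intervalIntegral.integral_of_le hs, integral_exp_mul hc, integral_exp_mul_Ioi hb]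
  have h1 : exp ((τ⁻¹ - σ⁻¹) * s) = exp (-(s / σ)) / exp (-(s / τ)) := by
    rw [← exp_sub]; congr 1; ring
  have h2 : exp (-(σ⁻¹ + τ⁻¹) * s) = exp (-(s / σ)) * exp (-(s / τ)) := by
    rw [← exp_add]; congr 1; ring
  have h3 : exp (s / τ) = (exp (-(s / τ)))⁻¹ := by rw [← exp_neg, neg_neg]
  rw [h1, h2, h3, mul_zero, exp_zero]
  have hστ : σ ^ 2 - τ ^ 2 ≠ 0 := by
    rw [sq_sub_sq]; exact mul_ne_zero (by positivity) (sub_ne_zero.2 hne.symm)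
  field_simp
  ring

lemma integral_integral_exp_neg_abs_add_sub_div_expMeasure_of_nonneg {σ τ u : ℝ} (hσ : 0 < σ)
    (hτ : 0 < τ) (hne : τ ≠ σ) (hu : 0 ≤ u) :
    ∫ x, ∫ y, exp (-|u + x - y| / τ) ∂expMeasure σ⁻¹ ∂expMeasure σ⁻¹
      = τ / (τ + σ) * ((τ * exp (-(u / τ)) - σ * exp (-(u / σ))) / (τ - σ)) := by
  set K₁ := 2 * τ * exp (-(u / σ)) / (σ ^ 2 - τ ^ 2) with hK₁
  set K₂ := σ⁻¹ * τ * (σ + τ) * exp (-(u / τ)) / (σ ^ 2 - τ ^ 2) with hK₂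
  have hinner :
      EqOn (fun x => σ⁻¹ * exp (-(σ⁻¹ * x)) * ∫ y, exp (-|u + x - y| / τ) ∂expMeasure σ⁻¹)
      (fun x => K₁ * exp (-(2 * σ⁻¹) * x) - K₂ * exp (-(σ⁻¹ + τ⁻¹) * x)) (Ioi 0) := by
    intro x hx
    dsimp only
    have e₁ : exp (-((u + x) / σ)) = exp (-(u / σ)) * exp (-(σ⁻¹ * x)) := by
      rw [← exp_add]; ring_nf
    have e₂ : exp (-((u + x) / τ)) = exp (-(u / τ)) * exp (-(τ⁻¹ * x)) := by
      rw [← exp_add]; ring_nf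
    have e₃ : exp (-(2 * σ⁻¹) * x) = exp (-(σ⁻¹ * x)) * exp (-(σ⁻¹ * x)) := by
      rw [← exp_add]; ring_nf
    have e₄ : exp (-(σ⁻¹ + τ⁻¹) * x) = exp (-(σ⁻¹ * x)) * exp (-(τ⁻¹ * x)) := by
      rw [← exp_add]; ring_nf
    rw [integral_exp_neg_abs_sub_div_expMeasure_of_nonneg hσ hτ hne
      (by linarith [mem_Ioi.1 hx]), e₁, e₂, e₃, e₄, hK₁, hK₂]
    field_simp
  have hb₁ : -(2 * σ⁻¹) < 0 := by simp only [neg_lt_zero]; positivity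
  have hb₂ : -(σ⁻¹ + τ⁻¹) < 0 := by simp only [neg_lt_zero]; positivity
  rw [integral_expMeasure_eq_setIntegral (inv_pos.2 hσ),
    setIntegral_congr_fun measurableSet_Ioi hinner,
    integral_sub ((integrableOn_exp_mul_Ioi hb₁ 0).const_mul _)
      ((integrableOn_exp_mul_Ioi hb₂ 0).const_mul _),
    integral_const_mul, integral_const_mul, integral_exp_mul_Ioi hb₁, integral_exp_mul_Ioi hb₂]
  simp only [mul_zero, exp_zero, hK₁, hK₂]
  have hστ : σ ^ 2 - τ ^ 2 ≠ 0 := by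
    rw [sq_sub_sq]; exact mul_ne_zero (by positivity) (sub_ne_zero.2 hne.symm)
  have hτσ : τ - σ ≠ 0 := sub_ne_zero.2 hne
  field_simp
  ring

lemma integral_exp_neg_abs_add_sub_div_expMeasure_prod {σ τ : ℝ} (hσ : 0 < σ) (hτ : 0 < τ)
    (hne : τ ≠ σ) (u : ℝ) :
    ∫ q, exp (-|u + q.1 - q.2| / τ) ∂(expMeasure σ⁻¹).prod (expMeasure σ⁻¹)
      = τ / (τ + σ) * ((τ * exp (-|u| / τ) - σ * exp (-|u| / σ)) / (τ - σ)) := by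
  have := isProbabilityMeasure_expMeasure (inv_pos.2 hσ)
  have hint (v : ℝ) : Integrable (fun q : ℝ × ℝ => exp (-|v + q.1 - q.2| / τ))
      ((expMeasure σ⁻¹).prod (expMeasure σ⁻¹)) :=
    integrable_exp_neg_abs_div (by fun_prop) hτ.le
  rcases le_total 0 u with hu | hu
  · rw [integral_prod _ (hint u),
      integral_integral_exp_neg_abs_add_sub_div_expMeasure_of_nonneg hσ hτ hne hu,
      abs_of_nonneg hu, neg_div, neg_div]
  · have hsymm (q : ℝ × ℝ) : |u + q.swap.1 - q.swap.2| = |-u + q.1 - q.2| := by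
      rw [← abs_neg]; congr 1; simp only [Prod.fst_swap, Prod.snd_swap]; ring
    rw [← integral_prod_swap]
    simp only [hsymm]
    rw [integral_prod _ (hint (-u)),
      integral_integral_exp_neg_abs_add_sub_div_expMeasure_of_nonneg hσ hτ hne (neg_nonneg.2 hu),
      abs_of_nonpos hu]
    simp only [neg_div, neg_neg]

namespace ProbabilityTheory

lemma IndepFun.integral_comp_prodMk {Ω α β E : Type*} [MeasurableSpace Ω] [MeasurableSpace α]
    [MeasurableSpace β] [NormedAddCommGroup E] [NormedSpace ℝ E] {P : Measure Ω}
    [IsFiniteMeasure P] {X : Ω → α} {Y : Ω → β} (hXY : IndepFun X Y P) (hX : AEMeasurable X P)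
    (hY : AEMeasurable Y P) {f : α × β → E} (hf : StronglyMeasurable f)
    (hfi : Integrable f ((P.map X).prod (P.map Y))) :
    ∫ ω, f (X ω, Y ω) ∂P = ∫ ω, ∫ y, f (X ω, y) ∂P.map Y ∂P := by
  calc ∫ ω, f (X ω, Y ω) ∂P = ∫ p, f p ∂P.map (fun ω => (X ω, Y ω)) :=
        (integral_map (hX.prodMk hY) hf.aestronglyMeasurable).symm
    _ = ∫ x, ∫ y, f (x, y) ∂P.map Y ∂P.map X := by
        rw [hXY.map_prod_eq_prod_map_map hX hY, integral_prod _ hfi]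
    _ = ∫ ω, ∫ y, f (X ω, y) ∂P.map Y ∂P :=
        integral_map hX hf.integral_prod_right'.aestronglyMeasurable

end ProbabilityTheory

lemma integral_exp_neg_abs_add_sub_of_indepFun {Ω : Type*} [MeasurableSpace Ω] {P : Measure Ω}
    [IsFiniteMeasure P] {σ τ : ℝ} (hσ : 0 < σ) (hτ : 0 < τ) (hne : τ ≠ σ) {W : Ω → ℝ}
    {Y : Ω → ℝ × ℝ} (hW : AEMeasurable W P) (hY : AEMeasurable Y P) (hWY : IndepFun W Y P)
    (hY_law : P.map Y = (expMeasure σ⁻¹).prod (expMeasure σ⁻¹)) :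
    ∫ ω, exp (-|W ω + (Y ω).1 - (Y ω).2| / τ) ∂P
      = ∫ ω, τ / (τ + σ) * ((τ * exp (-|W ω| / τ) - σ * exp (-|W ω| / σ)) / (τ - σ)) ∂P := by
  have := isProbabilityMeasure_expMeasure (inv_pos.2 hσ)
  rw [hWY.integral_comp_prodMk (f := fun p : ℝ × ℝ × ℝ => exp (-|p.1 + p.2.1 - p.2.2| / τ)) hW hY
    (by fun_prop : Continuous _).stronglyMeasurable
    (integrable_exp_neg_abs_div (by fun_prop) hτ.le), hY_law]
  simp only [integral_exp_neg_abs_add_sub_div_expMeasure_prod hσ hτ hne]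

theorem key_lemma_eq1_general {Ω : Type*} [MeasurableSpace Ω] (P : Measure Ω) [IsProbabilityMeasure P]
    (T T' G G' : Ω → ℝ) (σ τ t : ℝ) (hσ : 0 < σ) (hτ : 0 < τ) (hne : τ ≠ σ)
    (hT : Measure.map T P = expMeasure σ⁻¹)
    (hT' : Measure.map T' P = expMeasure σ⁻¹)
    (hGG' : IdentDistrib G G' P P)
    (hindep : iIndepFun ![T, T', G, G'] P) :
    ∫ ω, exp (-|t + T ω + G ω - T' ω - G' ω| / τ) ∂P =
      τ / (τ + σ) *
        ((τ * ∫ ω, exp (-|G' ω - G ω - t| / τ) ∂P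
          - σ * ∫ ω, exp (-|G' ω - G ω - t| / σ) ∂P) / (τ - σ)) := by
  have := isProbabilityMeasure_expMeasure (inv_pos.2 hσ)
  have hTm : AEMeasurable T P := aemeasurable_of_map_neZero (by rw [hT]; infer_instance)
  have hT'm : AEMeasurable T' P := aemeasurable_of_map_neZero (by rw [hT']; infer_instance)
  have hGm := hGG'.aemeasurable_fst
  have hG'm := hGG'.aemeasurable_snd
  have hmeas : ∀ i, AEMeasurable (![T, T', G, G'] i) P := by
    intro i; fin_cases i
    exacts [hTm, hT'm, hGm, hG'm]
  have hW : IndepFun (fun ω => t + (G ω - G' ω)) (fun ω => (T ω, T' ω)) P :=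
    (hindep.indepFun_prodMk_prodMk₀ hmeas 2 3 0 1 (by decide) (by decide) (by decide)
      (by decide)).comp (measurable_const.add (measurable_fst.sub measurable_snd)) measurable_id
  have hlaw : P.map (fun ω => (T ω, T' ω)) = (expMeasure σ⁻¹).prod (expMeasure σ⁻¹) := by
    rw [(hindep.indepFun (by decide : (0 : Fin 4) ≠ 1)).map_prod_eq_prod_map_map hTm hT'm, hT, hT']
  have hint {r : ℝ} (hr : 0 < r) : Integrable (fun ω => exp (-|G' ω - G ω - t| / r)) P :=
    integrable_exp_neg_abs_div (by fun_prop) hr.le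
  have hsymm (ω : Ω) : |t + (G ω - G' ω)| = |G' ω - G ω - t| := by
    rw [← abs_neg]; ring_nf
  calc ∫ ω, exp (-|t + T ω + G ω - T' ω - G' ω| / τ) ∂P
      = ∫ ω, exp (-|t + (G ω - G' ω) + T ω - T' ω| / τ) ∂P := by
        congr with ω
        ring_nf
    _ = ∫ ω, τ / (τ + σ) * ((τ * exp (-|G' ω - G ω - t| / τ)
          - σ * exp (-|G' ω - G ω - t| / σ)) / (τ - σ)) ∂P := by
        simpa only [hsymm] using integral_exp_neg_abs_add_sub_of_indepFun hσ hτ hne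
          (by fun_prop) (by fun_prop) hW hlaw
    _ = _ := by
        rw [integral_const_mul, integral_div, integral_sub ((hint hτ).const_mul _)
          ((hint hσ).const_mul _), integral_const_mul, integral_const_mul]

/-- Key lemma, eq (key1): for `T, T'` i.i.d. exponential with mean `σ` and `G, G'` i.i.d.
nonnegative, all jointly independent, and `τ ≠ σ`,
`E[exp(-|t+T+G-T'-G'|/τ)] = τ/(τ+σ) · (τ E[exp(-|G'-G-t|/τ)] - σ E[exp(-|G'-G-t|/σ)])/(τ-σ)`. -/
theorem key_lemma_eq1 {Ω : Type*} [MeasurableSpace Ω] (P : Measure Ω) [IsProbabilityMeasure P]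
    (T T' G G' : Ω → ℝ) (σ τ t : ℝ) (hσ : 0 < σ) (hτ : 0 < τ) (hne : τ ≠ σ)
    (hT : Measure.map T P = expMeasure σ⁻¹)
    (hT' : Measure.map T' P = expMeasure σ⁻¹)
    (hGG' : IdentDistrib G G' P P)
    (hG : ∀ ω, 0 ≤ G ω) (hG' : ∀ ω, 0 ≤ G' ω)
    (hindep : iIndepFun ![T, T', G, G'] P) :
    ∫ ω, exp (-|t + T ω + G ω - T' ω - G' ω| / τ) ∂P =
      τ / (τ + σ) *
        ((τ * ∫ ω, exp (-|G' ω - G ω - t| / τ) ∂P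
          - σ * ∫ ω, exp (-|G' ω - G ω - t| / σ) ∂P) / (τ - σ)) :=
  key_lemma_eq1_general P T T' G G' σ τ t hσ hτ hne hT hT' hGG' hindep
end

section
/- For any nonnegative random variable S and τ₁ > τ₂ > 0, if f_S(τ₁, τ₂) := (τ₁·E[exp(-S/τ₁)] - τ₂·E[exp(-S/τ₂)])/(τ₁ - τ₂) = 1 and S has finite variance, then Var[S] = 0. -/
/-!
With `g t = τ₁ e^{-t/τ₁} - τ₂ e^{-t/τ₂}`, the hypothesis says `E[g(S)] = τ₁ - τ₂ = g 0`.
Since `g' t = e^{-t/τ₂} - e^{-t/τ₁} < 0` for `t > 0`, `g` is strictly decreasing on `[0, ∞)`,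
so `g 0 - g(S)` is a nonnegative variable with zero mean. Hence `g(S) = g 0` almost surely,
i.e. `S = 0` almost surely, and the variance vanishes.
-/

open MeasureTheory ProbabilityTheory Real Set

noncomputable def scaledExpDiff (a b t : ℝ) : ℝ := a * exp (-t / a) - b * exp (-t / b)

lemma scaledExpDiff_zero (a b : ℝ) : scaledExpDiff a b 0 = a - b := by
  simp [scaledExpDiff]

lemma hasDerivAt_mul_exp_neg_div {a : ℝ} (ha : a ≠ 0) (t : ℝ) :
    HasDerivAt (fun t => a * exp (-t / a)) (-exp (-t / a)) t := by
  have h : HasDerivAt (fun t => -t / a) (-1 / a) t := by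
    simpa using (hasDerivAt_id t).neg.div_const a
  exact (h.exp.const_mul a).congr_deriv (by field_simp)

lemma hasDerivAt_scaledExpDiff {a b : ℝ} (ha : a ≠ 0) (hb : b ≠ 0) (t : ℝ) :
    HasDerivAt (scaledExpDiff a b) (exp (-t / b) - exp (-t / a)) t :=
  ((hasDerivAt_mul_exp_neg_div ha t).sub (hasDerivAt_mul_exp_neg_div hb t)).congr_deriv
    (by ring)

lemma strictAntiOn_scaledExpDiff {a b : ℝ} (hb : 0 < b) (hba : b < a) :
    StrictAntiOn (scaledExpDiff a b) (Ici 0) := by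
  have hderiv t := hasDerivAt_scaledExpDiff (hb.trans hba).ne' hb.ne' t
  refine strictAntiOn_of_deriv_neg (convex_Ici 0)
    (fun t _ => (hderiv t).continuousAt.continuousWithinAt) fun t ht => ?_
  rw [interior_Ici] at ht
  rw [(hderiv t).deriv, sub_neg, exp_lt_exp, neg_div, neg_div, neg_lt_neg_iff]
  exact div_lt_div_of_pos_left ht hb hba

section

variable {Ω : Type*} [MeasurableSpace Ω] {μ : Measure Ω}

lemma integrable_exp_neg_div [IsFiniteMeasure μ] {X : Ω → ℝ} (hX : Measurable X)
    (hX0 : ∀ᵐ ω ∂μ, 0 ≤ X ω) {τ : ℝ} (hτ : 0 ≤ τ) :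
    Integrable (fun ω => exp (-X ω / τ)) μ := by
  refine Integrable.of_bound (hX.neg.div_const τ).exp.aestronglyMeasurable 1 ?_
  filter_upwards [hX0] with ω hω
  rw [norm_of_nonneg (exp_pos _).le, exp_le_one_iff, neg_div]
  exact neg_nonpos.mpr (div_nonneg hω hτ)

lemma ae_eq_const_of_integral_comp_eq_of_strictAntiOn [IsProbabilityMeasure μ] {g : ℝ → ℝ}
    {a : ℝ} (hg : StrictAntiOn g (Ici a)) {X : Ω → ℝ} (hXa : ∀ᵐ ω ∂μ, a ≤ X ω)
    (hint : Integrable (fun ω => g (X ω)) μ) (heq : ∫ ω, g (X ω) ∂μ = g a) :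
    X =ᵐ[μ] fun _ => a := by
  have hgap_nonneg : 0 ≤ᵐ[μ] fun ω => g a - g (X ω) := by
    filter_upwards [hXa] with ω hω
    exact sub_nonneg.mpr (hg.antitoneOn self_mem_Ici hω hω)
  have hgap_int : Integrable (fun ω => g a - g (X ω)) μ := (integrable_const _).sub hint
  have hgap_zero : ∫ ω, (g a - g (X ω)) ∂μ = 0 := by
    rw [integral_sub (integrable_const _) hint, heq, integral_const, probReal_univ, one_smul,
      sub_self]
  filter_upwards [(integral_eq_zero_iff_of_nonneg_ae hgap_nonneg hgap_int).mp hgap_zero, hXa]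
    with ω hω hωa
  exact hg.injOn hωa self_mem_Ici (sub_eq_zero.mp hω).symm

end

theorem fS_eq_one_var_zero_general {Ω : Type*} [MeasurableSpace Ω] (P : Measure Ω)
    [IsProbabilityMeasure P]
    (S : Ω → ℝ) (hSmeas : Measurable S) (hS : ∀ ω, 0 ≤ S ω)
    (τ₁ τ₂ : ℝ) (hτ₂ : 0 < τ₂) (hτ : τ₂ < τ₁)
    (heq : (τ₁ * ∫ ω, exp (-S ω / τ₁) ∂P - τ₂ * ∫ ω, exp (-S ω / τ₂) ∂P) / (τ₁ - τ₂) = 1) :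
    variance S P = 0 := by
  have hS0 : ∀ᵐ ω ∂P, 0 ≤ S ω := ae_of_all _ hS
  have hint₁ := integrable_exp_neg_div hSmeas hS0 (hτ₂.trans hτ).le
  have hint₂ := integrable_exp_neg_div hSmeas hS0 hτ₂.le
  have hmean : ∫ ω, scaledExpDiff τ₁ τ₂ (S ω) ∂P = scaledExpDiff τ₁ τ₂ 0 := by
    rw [scaledExpDiff_zero, ← (div_eq_one_iff_eq (sub_ne_zero.mpr hτ.ne')).mp heq,
      ← integral_const_mul, ← integral_const_mul, ← integral_sub (hint₁.const_mul _)
        (hint₂.const_mul _)]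
    rfl
  have hSae := ae_eq_const_of_integral_comp_eq_of_strictAntiOn
    (strictAntiOn_scaledExpDiff hτ₂ hτ) hS0 ((hint₁.const_mul τ₁).sub (hint₂.const_mul τ₂)) hmean
  rw [variance_congr hSae]
  exact variance_zero P

/-- If `S ≥ 0` has finite variance and `f_S(τ₁,τ₂) = 1` for some `τ₁ > τ₂ > 0`,
then `Var[S] = 0`. -/
theorem fS_eq_one_var_zero {Ω : Type*} [MeasurableSpace Ω] (P : Measure Ω)
    [IsProbabilityMeasure P]
    (S : Ω → ℝ) (hSmeas : Measurable S) (hS : ∀ ω, 0 ≤ S ω) (hL2 : MemLp S 2 P)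
    (τ₁ τ₂ : ℝ) (hτ₂ : 0 < τ₂) (hτ : τ₂ < τ₁)
    (heq : (τ₁ * ∫ ω, exp (-S ω / τ₁) ∂P - τ₂ * ∫ ω, exp (-S ω / τ₂) ∂P) / (τ₁ - τ₂) = 1) :
    variance S P = 0 :=
  fS_eq_one_var_zero_general P S hSmeas hS τ₁ τ₂ hτ₂ hτ heq
end

section
/- Under the model of Theorem 1 (RNA count N₂ in equilibrium with delay distribution μ), the variance satisfies Var[N₂(t)] ≤ λ₁⁺λ₂τ₁τ₂ + λ₁⁺λ₁⁻λ₂²τ₁²τ₂²·τ₁/(τ₁+τ₂), with equality if and only if μ is a Dirac measure. Formally: for any two i.i.d. nonnegative random variables G, G' with law μ and τ₁ > τ₂ > 0, (τ₁·E[e^{-|G'-G|/τ₁}] - τ₂·E[e^{-|G'-G|/τ₂}])/(τ₁-τ₂) ≤ 1, with equality iff Var[G'-G] = 0, i.e., iff μ is a point mass. -/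
open MeasureTheory ProbabilityTheory Real

/-!
With `φ_s(τ) = τ (1 - e^{-s/τ}) = ∫₀ˢ e^{-u/τ} du` one has
`1 - f_S(τ₁, τ₂) = E[φ_S(τ₁) - φ_S(τ₂)] / (τ₁ - τ₂)`. For `s > 0` the map `τ ↦ φ_s(τ)` is
strictly increasing, its derivative being `1 - e^{-s/τ} (1 + s/τ) > 0`; hence `f_S ≤ 1`, with
equality iff `S = 0` almost surely. For `S = |G' - G|` this says that the centred variable `G' - G`
has variance zero, and by independence `Var[G' - G] = 2 Var[G]`, which vanishes iff `G` is almost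
surely constant.
-/

lemma hasDerivAt_mul_one_sub_exp_neg_div (s : ℝ) {x : ℝ} (hx : x ≠ 0) :
    HasDerivAt (fun y => y * (1 - exp (-s / y))) (1 - exp (-s / x) * (1 + s / x)) x := by
  have hinv : HasDerivAt (fun y => -s / y) (s / x ^ 2) x := by
    simpa [div_eq_mul_inv, neg_mul, mul_comm] using (hasDerivAt_inv hx).const_mul (-s)
  refine ((hasDerivAt_id' x).fun_mul ((hasDerivAt_const x 1).fun_sub hinv.exp)).congr_deriv ?_
  field_simp
  ring

lemma strictMonoOn_mul_one_sub_exp_neg_div {s : ℝ} (hs : 0 < s) :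
    StrictMonoOn (fun x => x * (1 - exp (-s / x))) (Set.Ioi 0) := by
  refine strictMonoOn_of_deriv_pos (convex_Ioi 0) ?_ fun x hx => ?_
  · exact fun x hx =>
      (hasDerivAt_mul_one_sub_exp_neg_div s (ne_of_gt hx)).continuousAt.continuousWithinAt
  rw [interior_Ioi] at hx
  have hx : 0 < x := hx
  rw [(hasDerivAt_mul_one_sub_exp_neg_div s hx.ne').deriv, sub_pos]
  calc exp (-s / x) * (1 + s / x) < exp (-s / x) * exp (s / x) := by
        gcongr
        linarith [add_one_lt_exp (div_pos hs hx).ne']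
    _ = 1 := by rw [← exp_add, neg_div, neg_add_cancel, exp_zero]

lemma mul_one_sub_exp_neg_div_le {s x y : ℝ} (hs : 0 ≤ s) (hx : 0 < x) (hxy : x ≤ y) :
    x * (1 - exp (-s / x)) ≤ y * (1 - exp (-s / y)) := by
  rcases hs.eq_or_lt with rfl | hs
  · simp
  · exact (strictMonoOn_mul_one_sub_exp_neg_div hs).monotoneOn hx (hx.trans_le hxy) hxy

lemma mul_one_sub_exp_neg_div_eq_iff {s x y : ℝ} (hs : 0 ≤ s) (hx : 0 < x) (hxy : x < y) :
    x * (1 - exp (-s / x)) = y * (1 - exp (-s / y)) ↔ s = 0 := by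
  refine ⟨fun h => ?_, by rintro rfl; simp⟩
  by_contra hs0
  exact (strictMonoOn_mul_one_sub_exp_neg_div (hs.lt_of_ne' hs0) hx (hx.trans hxy) hxy).ne h

section LaplaceRatio

variable {Ω : Type*} [MeasurableSpace Ω] {P : Measure Ω} {S : Ω → ℝ} {τ τ₁ τ₂ : ℝ}

/-- The paper's `f_S(τ₁, τ₂)`, built from the Laplace transform `E[e^{-S/τ}]` at `1/τ`. -/
noncomputable def laplaceRatio (P : Measure Ω) (S : Ω → ℝ) (τ₁ τ₂ : ℝ) : ℝ :=
  (τ₁ * ∫ ω, exp (-S ω / τ₁) ∂P - τ₂ * ∫ ω, exp (-S ω / τ₂) ∂P) / (τ₁ - τ₂)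

lemma integrable_exp_neg_div_s15 [IsFiniteMeasure P] (hS : AEMeasurable S P) (hS0 : ∀ ω, 0 ≤ S ω)
    (hτ : 0 ≤ τ) : Integrable (fun ω => exp (-S ω / τ)) P := by
  refine .of_bound (hS.neg.div_const τ).exp.aestronglyMeasurable 1 (.of_forall fun ω => ?_)
  rw [norm_of_nonneg (exp_pos _).le, exp_le_one_iff]
  exact div_nonpos_of_nonpos_of_nonneg (neg_nonpos.2 (hS0 ω)) hτ

lemma integrable_mul_one_sub_exp_neg_div [IsFiniteMeasure P] (hS : AEMeasurable S P)
    (hS0 : ∀ ω, 0 ≤ S ω) (hτ : 0 ≤ τ) : Integrable (fun ω => τ * (1 - exp (-S ω / τ))) P :=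
  ((integrable_const 1).sub (integrable_exp_neg_div_s15 hS hS0 hτ)).const_mul τ

lemma integral_mul_one_sub_exp_neg_div [IsProbabilityMeasure P] (hS : AEMeasurable S P)
    (hS0 : ∀ ω, 0 ≤ S ω) (hτ : 0 ≤ τ) :
    ∫ ω, τ * (1 - exp (-S ω / τ)) ∂P = τ * (1 - ∫ ω, exp (-S ω / τ) ∂P) := by
  rw [integral_const_mul, integral_sub (integrable_const 1) (integrable_exp_neg_div_s15 hS hS0 hτ),
    integral_const, probReal_univ, one_smul]

lemma laplaceRatio_eq_one_sub [IsProbabilityMeasure P] (hS : AEMeasurable S P)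
    (hS0 : ∀ ω, 0 ≤ S ω) (hτ₂ : 0 ≤ τ₂) (hτ : τ₂ < τ₁) :
    laplaceRatio P S τ₁ τ₂ = 1 - (∫ ω, (τ₁ * (1 - exp (-S ω / τ₁)) - τ₂ * (1 - exp (-S ω / τ₂))) ∂P)
      / (τ₁ - τ₂) := by
  have hτ₁ : 0 ≤ τ₁ := hτ₂.trans hτ.le
  rw [integral_sub (integrable_mul_one_sub_exp_neg_div hS hS0 hτ₁)
      (integrable_mul_one_sub_exp_neg_div hS hS0 hτ₂),
    integral_mul_one_sub_exp_neg_div hS hS0 hτ₁, integral_mul_one_sub_exp_neg_div hS hS0 hτ₂,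
    laplaceRatio]
  field_simp [(sub_pos.2 hτ).ne']
  ring

lemma laplaceRatio_le_one [IsProbabilityMeasure P] (hS : AEMeasurable S P) (hS0 : ∀ ω, 0 ≤ S ω)
    (hτ₂ : 0 < τ₂) (hτ : τ₂ < τ₁) : laplaceRatio P S τ₁ τ₂ ≤ 1 := by
  rw [laplaceRatio_eq_one_sub hS hS0 hτ₂.le hτ, sub_le_self_iff]
  refine div_nonneg (integral_nonneg fun ω => ?_) (sub_pos.2 hτ).le
  exact sub_nonneg.2 (mul_one_sub_exp_neg_div_le (hS0 ω) hτ₂ hτ.le)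

lemma laplaceRatio_eq_one_iff [IsProbabilityMeasure P] (hS : AEMeasurable S P)
    (hS0 : ∀ ω, 0 ≤ S ω) (hτ₂ : 0 < τ₂) (hτ : τ₂ < τ₁) :
    laplaceRatio P S τ₁ τ₂ = 1 ↔ S =ᵐ[P] 0 := by
  have hint : Integrable (fun ω => τ₁ * (1 - exp (-S ω / τ₁)) - τ₂ * (1 - exp (-S ω / τ₂))) P :=
    (integrable_mul_one_sub_exp_neg_div hS hS0 (hτ₂.trans hτ).le).sub
      (integrable_mul_one_sub_exp_neg_div hS hS0 hτ₂.le)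
  have hnonneg : 0 ≤ fun ω => τ₁ * (1 - exp (-S ω / τ₁)) - τ₂ * (1 - exp (-S ω / τ₂)) :=
    fun ω => sub_nonneg.2 (mul_one_sub_exp_neg_div_le (hS0 ω) hτ₂ hτ.le)
  rw [laplaceRatio_eq_one_sub hS hS0 hτ₂.le hτ, sub_eq_self, div_eq_zero_iff,
    or_iff_left (sub_pos.2 hτ).ne', integral_eq_zero_iff_of_nonneg hnonneg hint]
  exact Filter.eventually_congr (.of_forall fun ω =>
    sub_eq_zero.trans (eq_comm.trans (mul_one_sub_exp_neg_div_eq_iff (hS0 ω) hτ₂ hτ)))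

end LaplaceRatio

section Variance

variable {Ω : Type*} [MeasurableSpace Ω] {P : Measure Ω} [IsProbabilityMeasure P]
  {X Y : Ω → ℝ}

lemma variance_eq_zero_iff_ae_eq_integral (hX : MemLp X 2 P) :
    Var[X; P] = 0 ↔ X =ᵐ[P] fun _ => P[X] := by
  refine ⟨ae_eq_integral_of_variance_eq_zero hX, fun h => ?_⟩
  rw [variance_congr h, variance_eq_integral aemeasurable_const]
  simp

lemma variance_eq_zero_iff_exists_map_eq_dirac (hX : MemLp X 2 P) :
    Var[X; P] = 0 ↔ ∃ c, P.map X = .dirac c := by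
  refine ⟨fun h => ⟨P[X], (hasLaw_dirac_of_ae_eq (ae_eq_integral_of_variance_eq_zero hX h)).map_eq⟩,
    fun ⟨c, hc⟩ => ?_⟩
  rw [variance_congr (HasLaw.ae_eq_of_dirac ⟨hX.aemeasurable, hc⟩),
    variance_eq_integral aemeasurable_const]
  simp

lemma ProbabilityTheory.IdentDistrib.variance_sub_eq_two_mul (hid : IdentDistrib X Y P P)
    (hindep : IndepFun X Y P) (hX : MemLp X 2 P) : Var[fun ω => Y ω - X ω; P] = 2 * Var[X; P] := by
  rw [variance_fun_sub (hid.memLp_snd hX) hX, hindep.symm.covariance_eq_zero (hid.memLp_snd hX) hX,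
    ← hid.variance_eq]
  ring

lemma ProbabilityTheory.IdentDistrib.variance_sub_eq_zero_iff (hid : IdentDistrib X Y P P)
    (hX : MemLp X 2 P) :
    Var[fun ω => Y ω - X ω; P] = 0 ↔ (fun ω => Y ω - X ω) =ᵐ[P] 0 := by
  have hY := hid.memLp_snd hX
  rw [variance_eq_zero_iff_ae_eq_integral (X := fun ω => Y ω - X ω) (hY.sub hX),
    integral_sub (hY.integrable one_le_two) (hX.integrable one_le_two), ← hid.integral_eq, sub_self]
  rfl

end Variance

theorem rna_variance_bound_general {Ω : Type*} [MeasurableSpace Ω] (P : Measure Ω)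
    [IsProbabilityMeasure P]
    (G G' : Ω → ℝ)
    (hG : ∀ ω, 0 ≤ G ω)
    (hid : IdentDistrib G G' P P) (hindep : IndepFun G G' P)
    (hL2 : MemLp G 2 P)
    (τ₁ τ₂ : ℝ) (hτ₂ : 0 < τ₂) (hτ : τ₂ < τ₁) :
    ((τ₁ * ∫ ω, exp (-|G' ω - G ω| / τ₁) ∂P
        - τ₂ * ∫ ω, exp (-|G' ω - G ω| / τ₂) ∂P) / (τ₁ - τ₂) ≤ 1) ∧
    ((τ₁ * ∫ ω, exp (-|G' ω - G ω| / τ₁) ∂P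
        - τ₂ * ∫ ω, exp (-|G' ω - G ω| / τ₂) ∂P) / (τ₁ - τ₂) = 1 ↔
      variance (fun ω => G' ω - G ω) P = 0) ∧
    (variance (fun ω => G' ω - G ω) P = 0 ↔
      ∃ c : ℝ, 0 ≤ c ∧ Measure.map G P = Measure.dirac c) := by
  have hS : AEMeasurable (fun ω => |G' ω - G ω|) P :=
    (hid.aemeasurable_snd.sub hid.aemeasurable_fst).abs
  have hS0 : ∀ ω, 0 ≤ |G' ω - G ω| := fun ω => abs_nonneg _
  refine ⟨laplaceRatio_le_one hS hS0 hτ₂ hτ, ?_, ?_⟩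
  · rw [hid.variance_sub_eq_zero_iff hL2]
    exact (laplaceRatio_eq_one_iff hS hS0 hτ₂ hτ).trans
      (Filter.eventually_congr (.of_forall fun ω => abs_eq_zero))
  · rw [hid.variance_sub_eq_two_mul hindep hL2, mul_eq_zero, or_iff_right two_ne_zero,
      variance_eq_zero_iff_exists_map_eq_dirac hL2]
    refine exists_congr fun c => ⟨fun hc => ⟨?_, hc⟩, And.right⟩
    obtain ⟨_, hc0⟩ :=
      ((HasLaw.ae_eq_of_dirac ⟨hL2.aemeasurable, hc⟩).mono fun ω h => h ▸ hG ω).exists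
    exact hc0

/-- Sharp bound for the delay term in the variance of the RNA number: for `G, G'` i.i.d.
nonnegative with law `μ` of finite variance, and `τ₁ > τ₂ > 0`,
`(τ₁ E[e^{-|G'-G|/τ₁}] - τ₂ E[e^{-|G'-G|/τ₂}])/(τ₁-τ₂) ≤ 1`, with equality iff
`Var[G'-G] = 0`, which holds iff `μ` is a point mass. -/
theorem rna_variance_bound {Ω : Type*} [MeasurableSpace Ω] (P : Measure Ω)
    [IsProbabilityMeasure P]
    (G G' : Ω → ℝ) (hGmeas : Measurable G) (hG'meas : Measurable G')
    (hG : ∀ ω, 0 ≤ G ω) (hG' : ∀ ω, 0 ≤ G' ω)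
    (hid : IdentDistrib G G' P P) (hindep : IndepFun G G' P)
    (hL2 : MemLp G 2 P)
    (τ₁ τ₂ : ℝ) (hτ₂ : 0 < τ₂) (hτ : τ₂ < τ₁) :
    ((τ₁ * ∫ ω, exp (-|G' ω - G ω| / τ₁) ∂P
        - τ₂ * ∫ ω, exp (-|G' ω - G ω| / τ₂) ∂P) / (τ₁ - τ₂) ≤ 1) ∧
    ((τ₁ * ∫ ω, exp (-|G' ω - G ω| / τ₁) ∂P
        - τ₂ * ∫ ω, exp (-|G' ω - G ω| / τ₂) ∂P) / (τ₁ - τ₂) = 1 ↔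
      variance (fun ω => G' ω - G ω) P = 0) ∧
    (variance (fun ω => G' ω - G ω) P = 0 ↔
      ∃ c : ℝ, 0 ≤ c ∧ Measure.map G P = Measure.dirac c) :=
  rna_variance_bound_general P G G' hG hid hindep hL2 τ₁ τ₂ hτ₂ hτ
end

section
/- Let τ₁, τ₂, τ₃ > 0 be pairwise distinct, and let S be a symmetric real random variable and T₂, T₂' i.i.d. Exp(1/τ₂) independent of S. Then E[exp(-|T₂ - T₂' + S|/τ₁)] = (τ₁/(τ₁+τ₂))·(τ₁·E[e^{-|S|/τ₁}] - τ₂·E[e^{-|S|/τ₂}])/(τ₁-τ₂). -/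
open MeasureTheory ProbabilityTheory Real

open scoped ENNReal NNReal

open Set Filter

lemma exp_int_Ioi {k c : ℝ} (hk : 0 < k) : ∫ t in Ioi c, exp (-(k*t)) = exp (-(k*c))/k := by
  have h : ∀ x ∈ Ioi c, HasDerivAt (fun t => -exp (-(k*t))/k) (exp (-(k*x))) x := by
    intro x _
    have : HasDerivAt (fun t => -(k*t)) (-k) x := by
      simpa using ((hasDerivAt_id x).const_mul (-k))
    have h2 := (this.exp).div_const k
    refine ((h2.neg).congr_deriv ?_).congr_of_eventuallyEq (Eventually.of_forall fun t => ?_)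
    · rw [mul_neg, neg_div, neg_neg, mul_div_assoc, div_self hk.ne', mul_one]
    · simp only [Pi.neg_apply]; ring
  have hint : IntegrableOn (fun t => exp (-(k*t))) (Ioi c) := by
    simpa [neg_mul] using exp_neg_integrableOn_Ioi c hk
  have htend : Tendsto (fun t => -exp (-(k*t))/k) atTop (nhds 0) := by
    have h1 : Tendsto (fun t : ℝ => -(k*t)) atTop atBot :=
      tendsto_neg_atBot_iff.mpr (tendsto_id.const_mul_atTop hk)
    have h2 : Tendsto (fun t : ℝ => exp (-(k*t))) atTop (nhds 0) :=
      Real.tendsto_exp_atBot.comp h1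
    have := (h2.neg).div_const k
    simpa using this
  have hc : ContinuousWithinAt (fun t => -exp (-(k*t))/k) (Ici c) c := by
    apply Continuous.continuousWithinAt; continuity
  have := integral_Ioi_of_hasDerivAt_of_tendsto hc h hint htend
  rw [this]; ring

lemma exp_int_Ioc {k : ℝ} (hk : k ≠ 0) {c d : ℝ} (hcd : c ≤ d) :
    ∫ t in Ioc c d, exp (k*t) = (exp (k*d) - exp (k*c))/k := by
  rw [← intervalIntegral.integral_of_le hcd]
  rw [intervalIntegral.integral_comp_mul_left (fun x => exp x) hk]
  simp [integral_exp, smul_eq_mul]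
  ring

lemma integral_expMeasure {r : ℝ} (hr : 0 < r) (g : ℝ → ℝ) :
    ∫ x, g x ∂(expMeasure r) = ∫ x in Ioi 0, r * exp (-(r*x)) * g x := by
  have hd : expMeasure r = volume.withDensity
      (fun x => ((exponentialPDFReal r x).toNNReal : ℝ≥0∞)) := by
    rw [expMeasure, gammaMeasure]
    congr 1
  rw [hd, integral_withDensity_eq_integral_smul
    ((measurable_exponentialPDFReal r).real_toNNReal) g]
  have h1 : ∀ x : ℝ, ((exponentialPDFReal r x).toNNReal : ℝ≥0) • g x
      = Set.indicator (Ici 0) (fun x => r * exp (-(r*x)) * g x) x := by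
    intro x
    rw [exponentialPDFReal, gammaPDFReal]
    by_cases hx : 0 ≤ x
    · simp only [indicator_of_mem (mem_Ici.mpr hx), if_pos hx]
      rw [NNReal.smul_def, smul_eq_mul, Real.coe_toNNReal _ (by positivity)]
      norm_num
    · simp only [indicator_of_notMem (fun h => hx (mem_Ici.mp h)), if_neg hx]
      simp
  simp_rw [h1]
  rw [integral_indicator measurableSet_Ici, ← integral_Ici_eq_integral_Ioi]

lemma inner_int {a b : ℝ} (ha : 0 < a) (hb : 0 < b) (hab : a ≠ b) (u : ℝ) :
    ∫ t, exp (-|u - t|/a) ∂(expMeasure b⁻¹) =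
      if u ≤ 0 then a/(a+b) * exp (u/a)
      else 2*a*b/((b-a)*(a+b)) * exp (-(u/b)) - a/(b-a) * exp (-(u/a)) := by
  have hb' : (0:ℝ) < b⁻¹ := by positivity
  have hk : (0:ℝ) < a⁻¹ + b⁻¹ := by positivity
  have hexp : ∀ x z : ℝ, b⁻¹ * exp x * exp z = b⁻¹ * exp (x + z) := by
    intro x z; rw [mul_assoc, ← Real.exp_add]
  rw [integral_expMeasure hb']
  by_cases hu : u ≤ 0
  · rw [if_pos hu]
    have hcong : ∀ t ∈ Ioi (0:ℝ),
        b⁻¹ * exp (-(b⁻¹*t)) * exp (-|u - t|/a)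
          = (b⁻¹ * exp (u/a)) * exp (-((a⁻¹+b⁻¹)*t)) := by
      intro t ht
      have ht' : (0:ℝ) < t := ht
      have habs : |u - t| = t - u := by rw [abs_of_nonpos (by linarith)]; ring
      rw [habs, hexp, hexp]
      congr 1; field_simp; ring
    rw [setIntegral_congr_fun measurableSet_Ioi hcong, integral_const_mul, exp_int_Ioi hk]
    rw [mul_zero, neg_zero, Real.exp_zero]
    field_simp
    ring
  · push_neg at hu
    rw [if_neg (not_le.mpr hu)]
    have hsplit : Ioc (0:ℝ) u ∪ Ioi u = Ioi 0 := Ioc_union_Ioi_eq_Ioi hu.le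
    have hdisj : Disjoint (Ioc (0:ℝ) u) (Ioi u) := Ioc_disjoint_Ioi le_rfl
    set F := fun t => b⁻¹ * exp (-(b⁻¹*t)) * exp (-|u - t|/a) with hF
    have hFc : Continuous F := by
      apply Continuous.mul (by continuity)
      apply Real.continuous_exp.comp
      continuity
    have hIoi : IntegrableOn (fun t => exp (-((a⁻¹+b⁻¹)*t))) (Ioi u) := by
      refine ((exp_neg_integrableOn_Ioi u hk).congr_fun (fun x _ => ?_) measurableSet_Ioi)
      congr 1; ring
    have hint2 : IntegrableOn F (Ioi u) := by
      apply Integrable.mono' (g := fun t => (b⁻¹ * exp (u/a)) * exp (-((a⁻¹+b⁻¹)*t)))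
      · exact hIoi.const_mul _
      · exact hFc.aestronglyMeasurable.restrict
      · filter_upwards [ae_restrict_mem measurableSet_Ioi] with t ht
        have habs : |u - t| = t - u := by
          rw [abs_of_nonpos (by simp only [mem_Ioi] at ht; linarith)]; ring
        rw [hF]; simp only [norm_eq_abs]
        rw [habs, abs_of_pos (by positivity), hexp, hexp]
        apply le_of_eq
        congr 1; field_simp; ring
    have hint1 : IntegrableOn F (Ioc 0 u) :=
      ((hFc.continuousOn).integrableOn_compact isCompact_Icc).mono_set Ioc_subset_Icc_self
    rw [← hsplit, setIntegral_union hdisj measurableSet_Ioi hint1 hint2]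
    have e1 : ∫ t in Ioc (0:ℝ) u, F t
        = (b⁻¹ * exp (-(u/a))) * ((exp ((a⁻¹-b⁻¹)*u) - 1)/(a⁻¹-b⁻¹)) := by
      have hcong : ∀ t ∈ Ioc (0:ℝ) u,
          F t = (b⁻¹ * exp (-(u/a))) * exp ((a⁻¹-b⁻¹)*t) := by
        intro t ht
        have habs : |u - t| = u - t := abs_of_nonneg (by linarith [ht.2])
        rw [hF]; simp only
        rw [habs, hexp, hexp]
        congr 1; field_simp; ring
      rw [setIntegral_congr_fun measurableSet_Ioc hcong, integral_const_mul,
        exp_int_Ioc (sub_ne_zero.mpr (fun h => hab (by field_simp at h; linarith))) hu.le]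
      rw [mul_zero, Real.exp_zero]
    have e2 : ∫ t in Ioi u, F t
        = (b⁻¹ * exp (u/a)) * (exp (-((a⁻¹+b⁻¹)*u))/(a⁻¹+b⁻¹)) := by
      have hcong : ∀ t ∈ Ioi u,
          F t = (b⁻¹ * exp (u/a)) * exp (-((a⁻¹+b⁻¹)*t)) := by
        intro t ht
        have habs : |u - t| = t - u := by
          rw [abs_of_nonpos (by simp only [mem_Ioi] at ht; linarith)]; ring
        rw [hF]; simp only
        rw [habs, hexp, hexp]
        congr 1; field_simp; ring
      rw [setIntegral_congr_fun measurableSet_Ioi hcong, integral_const_mul, exp_int_Ioi hk]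
    rw [e1, e2]
    have hab' : a⁻¹ - b⁻¹ ≠ 0 := sub_ne_zero.mpr (fun h => hab (by field_simp at h; linarith))
    have h1 : exp ((a⁻¹-b⁻¹)*u) * exp (-(u/a)) = exp (-(u/b)) := by
      rw [← Real.exp_add]; congr 1; field_simp; ring
    have h2 : exp (-((a⁻¹+b⁻¹)*u)) * exp (u/a) = exp (-(u/b)) := by
      rw [← Real.exp_add]; congr 1; field_simp; ring
    have hba : b - a ≠ 0 := sub_ne_zero.mpr (Ne.symm hab)
    have hab2 : a + b ≠ 0 := by positivity
    have k1 : b⁻¹ * exp (-(u/a)) * ((exp ((a⁻¹-b⁻¹)*u) - 1)/(a⁻¹-b⁻¹))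
        = a/(b-a) * (exp ((a⁻¹-b⁻¹)*u) * exp (-(u/a)) - exp (-(u/a))) := by
      field_simp
    have k2 : b⁻¹ * exp (u/a) * (exp (-((a⁻¹+b⁻¹)*u))/(a⁻¹+b⁻¹))
        = a/(a+b) * (exp (-((a⁻¹+b⁻¹)*u)) * exp (u/a)) := by
      field_simp
      ring
    rw [k1, k2, h1, h2]
    field_simp
    ring

lemma int_exp_Ioi {k c : ℝ} (hk : 0 < k) :
    IntegrableOn (fun t => exp (-(k*t))) (Ioi c) :=
  (exp_neg_integrableOn_Ioi c hk).congr_fun (fun x _ => by congr 1; ring) measurableSet_Ioi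

lemma double_int_nonneg {a b : ℝ} (ha : 0 < a) (hb : 0 < b) (hab : a ≠ b) {s : ℝ}
    (hs : 0 ≤ s) :
    ∫ t, (∫ t', exp (-|t - t' + s|/a) ∂(expMeasure b⁻¹)) ∂(expMeasure b⁻¹)
      = a/((a+b)*(a-b)) * (a * exp (-(s/a)) - b * exp (-(s/b))) := by
  have hb' : (0:ℝ) < b⁻¹ := by positivity
  have hk : (0:ℝ) < a⁻¹ + b⁻¹ := by positivity
  have hk2 : (0:ℝ) < b⁻¹ + b⁻¹ := by positivity
  rw [integral_expMeasure hb']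
  have hcong : ∀ t ∈ Ioi (0:ℝ),
      b⁻¹ * exp (-(b⁻¹*t)) * ∫ t', exp (-|t - t' + s|/a) ∂(expMeasure b⁻¹)
        = (2*a*b/((b-a)*(a+b)) * b⁻¹ * exp (-(s/b))) * exp (-((b⁻¹+b⁻¹)*t))
          - (a/(b-a) * b⁻¹ * exp (-(s/a))) * exp (-((a⁻¹+b⁻¹)*t)) := by
    intro t ht
    have ht' : (0:ℝ) < t := ht
    have h1 : (fun t' => exp (-|t - t' + s|/a)) = fun t' => exp (-|(t+s) - t'|/a) := by
      funext t'; congr 2; congr 1; ring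
    rw [h1, inner_int ha hb hab (t+s), if_neg (by push_neg; linarith)]
    rw [mul_sub]
    have hb0 : b ≠ 0 := hb.ne'
    have ha0 : a ≠ 0 := ha.ne'
    congr 1
    · rw [show -((t+s)/b) = -(s/b) + -(b⁻¹*t) by field_simp; ring,
        show -((b⁻¹+b⁻¹)*t) = -(b⁻¹*t) + -(b⁻¹*t) by ring, Real.exp_add, Real.exp_add]
      ring
    · rw [show -((t+s)/a) = -(s/a) + -(a⁻¹*t) by field_simp; ring,
        show -((a⁻¹+b⁻¹)*t) = -(a⁻¹*t) + -(b⁻¹*t) by ring, Real.exp_add, Real.exp_add]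
      ring
  rw [setIntegral_congr_fun measurableSet_Ioi hcong]
  rw [integral_sub ((int_exp_Ioi hk2).const_mul _) ((int_exp_Ioi hk).const_mul _),
    integral_const_mul, integral_const_mul, exp_int_Ioi hk2, exp_int_Ioi hk]
  rw [mul_zero, neg_zero, Real.exp_zero]
  have hba : b - a ≠ 0 := sub_ne_zero.mpr (Ne.symm hab)
  have hab' : a - b ≠ 0 := sub_ne_zero.mpr hab
  field_simp
  simp only [mul_zero, zero_div, neg_zero, Real.exp_zero]
  ring

lemma double_int_all {a b : ℝ} (ha : 0 < a) (hb : 0 < b) (hab : a ≠ b) (s : ℝ) :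
    ∫ q : ℝ × ℝ, exp (-|q.1 - q.2 + s|/a) ∂((expMeasure b⁻¹).prod (expMeasure b⁻¹))
      = a/((a+b)*(a-b)) * (a * exp (-(|s|/a)) - b * exp (-(|s|/b))) := by
  have hb' : (0:ℝ) < b⁻¹ := by positivity
  haveI : IsProbabilityMeasure (expMeasure b⁻¹) := isProbabilityMeasure_expMeasure hb'
  have hcont : ∀ c : ℝ, Continuous (fun q : ℝ × ℝ => exp (-|q.1 - q.2 + c|/a)) := by
    intro c; apply Real.continuous_exp.comp; continuity
  have hint : ∀ c : ℝ, Integrable (fun q : ℝ × ℝ => exp (-|q.1 - q.2 + c|/a))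
      ((expMeasure b⁻¹).prod (expMeasure b⁻¹)) := by
    intro c
    apply Integrable.mono' (integrable_const 1) (hcont c).aestronglyMeasurable
    filter_upwards with q
    rw [norm_eq_abs, abs_of_pos (exp_pos _)]
    apply Real.exp_le_one_iff.mpr
    have : (0:ℝ) ≤ |q.1 - q.2 + c| := abs_nonneg _
    have := ha
    rw [div_nonpos_iff]; right; constructor <;> linarith
  rcases le_or_gt 0 s with hs | hs
  · rw [integral_prod _ (hint s), double_int_nonneg ha hb hab hs, abs_of_nonneg hs]
  · have hswap : ∫ q : ℝ × ℝ, exp (-|q.1 - q.2 + s|/a)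
        ∂((expMeasure b⁻¹).prod (expMeasure b⁻¹))
        = ∫ q : ℝ × ℝ, exp (-|q.1 - q.2 + (-s)|/a)
        ∂((expMeasure b⁻¹).prod (expMeasure b⁻¹)) := by
      conv_lhs => rw [← Measure.prod_swap]
      rw [integral_map measurable_swap.aemeasurable]
      · congr 1; funext q
        simp only [Prod.swap]
        congr 2; congr 1
        rw [show q.2 - q.1 + s = -(q.1 - q.2 + -s) by ring, abs_neg]
      · rw [Measure.prod_swap]
        exact (hcont s).aestronglyMeasurable
    rw [hswap, integral_prod _ (hint (-s)), double_int_nonneg ha hb hab (by linarith),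
      abs_of_neg hs]

lemma iIndepFun_of_ae_eq {Ω : Type*} [MeasurableSpace Ω] {P : Measure Ω}
    {f g : Fin 3 → Ω → ℝ}
    (h : iIndepFun (m := fun _ : Fin 3 => (inferInstance : MeasurableSpace ℝ)) f P)
    (hae : ∀ i, f i =ᵐ[P] g i) :
    iIndepFun (m := fun _ : Fin 3 => (inferInstance : MeasurableSpace ℝ)) g P := by
  rw [iIndepFun_iff_measure_inter_preimage_eq_mul] at h ⊢
  intro S sets hsets
  have hpre : ∀ i, (g i ⁻¹' sets i : Set Ω) =ᵐ[P] (f i ⁻¹' sets i : Set Ω) := by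
    intro i
    filter_upwards [hae i] with ω hω
    show (g i ω ∈ sets i) = (f i ω ∈ sets i)
    rw [hω]
  have h1 : P (⋂ i ∈ S, g i ⁻¹' sets i) = P (⋂ i ∈ S, f i ⁻¹' sets i) := by
    apply measure_congr
    have : ∀ i : Fin 3, (⋂ (_ : i ∈ S), g i ⁻¹' sets i : Set Ω)
        =ᵐ[P] (⋂ (_ : i ∈ S), f i ⁻¹' sets i : Set Ω) := by
      intro i
      by_cases hi : i ∈ S
      · simpa [hi] using hpre i
      · simp [hi]
    exact EventuallyEq.countable_iInter this
  rw [h1, h S hsets]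
  exact Finset.prod_congr rfl fun i _ => (measure_congr (hpre i)).symm

/-- Key lemma (key2) with a symmetric summand: for `T₂, T₂'` i.i.d. exponential with mean `τ₂`,
`S` symmetric and independent of `(T₂, T₂')`, and pairwise distinct `τ₁, τ₂, τ₃ > 0`,
`E[exp(-|T₂-T₂'+S|/τ₁)] = (τ₁/(τ₁+τ₂)) (τ₁ E[e^{-|S|/τ₁}] - τ₂ E[e^{-|S|/τ₂}])/(τ₁-τ₂)`. -/
theorem key_lemma_symmetric {Ω : Type*} [MeasurableSpace Ω] (P : Measure Ω)
    [IsProbabilityMeasure P]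
    (T₂ T₂' S : Ω → ℝ) (τ₁ τ₂ τ₃ : ℝ) (hτ₁ : 0 < τ₁) (hτ₂ : 0 < τ₂) (hτ₃ : 0 < τ₃)
    (h12 : τ₁ ≠ τ₂) (h13 : τ₁ ≠ τ₃) (h23 : τ₂ ≠ τ₃)
    (hT₂ : Measure.map T₂ P = expMeasure τ₂⁻¹)
    (hT₂' : Measure.map T₂' P = expMeasure τ₂⁻¹)
    (hSsymm : IdentDistrib S (fun ω => -S ω) P P)
    (hindep : iIndepFun (m := fun _ : Fin 3 => (inferInstance : MeasurableSpace ℝ))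
      ![T₂, T₂', S] P) :
    ∫ ω, exp (-|T₂ ω - T₂' ω + S ω| / τ₁) ∂P =
      τ₁ / (τ₁ + τ₂) *
        ((τ₁ * ∫ ω, exp (-|S ω| / τ₁) ∂P - τ₂ * ∫ ω, exp (-|S ω| / τ₂) ∂P) / (τ₁ - τ₂)) := by
  have hr : (0:ℝ) < τ₂⁻¹ := by positivity
  haveI hPexp : IsProbabilityMeasure (expMeasure τ₂⁻¹) := isProbabilityMeasure_expMeasure hr
  set μ := expMeasure τ₂⁻¹ with hμ
  -- AEMeasurability
  have hT2m : AEMeasurable T₂ P := by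
    by_contra h
    have h0 := Measure.map_of_not_aemeasurable h
    rw [h0] at hT₂
    have h1 : μ univ = 1 := measure_univ
    rw [← hT₂] at h1
    simp at h1
  have hT2'm : AEMeasurable T₂' P := by
    by_contra h
    have h0 := Measure.map_of_not_aemeasurable h
    rw [h0] at hT₂'
    have h1 : μ univ = 1 := measure_univ
    rw [← hT₂'] at h1
    simp at h1
  have hSm : AEMeasurable S P := hSsymm.aemeasurable_fst
  obtain ⟨A, hAmeas, hAae⟩ := hT2m
  obtain ⟨B, hBmeas, hBae⟩ := hT2'm
  obtain ⟨C, hCmeas, hCae⟩ := hSm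
  have hindep' : iIndepFun (m := fun _ : Fin 3 => (inferInstance : MeasurableSpace ℝ))
      ![A, B, C] P := by
    apply iIndepFun_of_ae_eq hindep
    intro i
    fin_cases i
    · simpa using hAae
    · simpa using hBae
    · simpa using hCae
  have hmapA : Measure.map A P = μ := by rw [← Measure.map_congr hAae, hT₂]
  have hmapB : Measure.map B P = μ := by rw [← Measure.map_congr hBae, hT₂']
  set ν := Measure.map C P with hν
  haveI hνP : IsProbabilityMeasure ν := Measure.isProbabilityMeasure_map hCmeas.aemeasurable
  have hmeas3 : ∀ i, Measurable (![A, B, C] i) := by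
    intro i; fin_cases i <;> simpa
  have hCAB : IndepFun C (fun ω => (A ω, B ω)) P := by
    have := hindep'.indepFun_prodMk hmeas3 0 1 2 (by decide) (by decide)
    simpa using this.symm
  have hAB : IndepFun A B P := by
    have := hindep'.indepFun (show (0 : Fin 3) ≠ 1 by decide)
    simpa using this
  have hmapAB : Measure.map (fun ω => (A ω, B ω)) P = μ.prod μ := by
    refine ((indepFun_iff_map_prod_eq_prod_map_map hAmeas.aemeasurable
      hBmeas.aemeasurable).mp hAB).trans ?_
    rw [hmapA, hmapB]
  have hmapJ : Measure.map (fun ω => (C ω, (A ω, B ω))) P = ν.prod (μ.prod μ) := by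
    rw [← hmapAB, hν]
    exact (indepFun_iff_map_prod_eq_prod_map_map hCmeas.aemeasurable
      (hAmeas.prodMk hBmeas).aemeasurable).mp hCAB
  -- Rewrite LHS
  set G : ℝ × (ℝ × ℝ) → ℝ := fun p => exp (-|p.2.1 - p.2.2 + p.1| / τ₁) with hG
  have hGcont : Continuous G := by
    apply Real.continuous_exp.comp
    apply Continuous.div_const
    apply Continuous.neg
    apply Continuous.abs
    fun_prop
  have hstep1 : ∫ ω, exp (-|T₂ ω - T₂' ω + S ω| / τ₁) ∂P
      = ∫ ω, G (C ω, (A ω, B ω)) ∂P := by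
    apply integral_congr_ae
    filter_upwards [hAae, hBae, hCae] with ω h1 h2 h3
    rw [hG]
    simp only
    rw [← h1, ← h2, ← h3]
  have hstep2 : ∫ ω, G (C ω, (A ω, B ω)) ∂P = ∫ p, G p ∂(ν.prod (μ.prod μ)) := by
    rw [← hmapJ]
    exact (integral_map (hCmeas.prodMk (hAmeas.prodMk hBmeas)).aemeasurable
      hGcont.aestronglyMeasurable).symm
  have hGint : Integrable G (ν.prod (μ.prod μ)) := by
    apply Integrable.mono' (integrable_const 1) hGcont.aestronglyMeasurable
    filter_upwards with p
    rw [norm_eq_abs, abs_of_pos (exp_pos _)]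
    apply Real.exp_le_one_iff.mpr
    have h0 : (0:ℝ) ≤ |p.2.1 - p.2.2 + p.1| := abs_nonneg _
    rw [div_nonpos_iff]; right; constructor <;> linarith
  have hstep3 : ∫ p, G p ∂(ν.prod (μ.prod μ))
      = ∫ s, (∫ q : ℝ × ℝ, exp (-|q.1 - q.2 + s| / τ₁) ∂(μ.prod μ)) ∂ν := by
    rw [integral_prod _ hGint]
  have hstep4 : ∫ s, (∫ q : ℝ × ℝ, exp (-|q.1 - q.2 + s| / τ₁) ∂(μ.prod μ)) ∂ν
      = ∫ s, τ₁/((τ₁+τ₂)*(τ₁-τ₂)) * (τ₁ * exp (-(|s|/τ₁)) - τ₂ * exp (-(|s|/τ₂))) ∂ν := by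
    apply integral_congr_ae
    filter_upwards with s
    have := double_int_all hτ₁ hτ₂ h12 s
    rw [hμ]
    convert this using 2
  -- split the integral
  have hexpint : ∀ τ : ℝ, 0 < τ → Integrable (fun s : ℝ => exp (-(|s|/τ))) ν := by
    intro τ hτ
    apply Integrable.mono' (integrable_const 1)
    · apply Continuous.aestronglyMeasurable
      apply Real.continuous_exp.comp
      fun_prop
    · filter_upwards with s
      rw [norm_eq_abs, abs_of_pos (exp_pos _)]
      apply Real.exp_le_one_iff.mpr
      have h0 : (0:ℝ) ≤ |s| := abs_nonneg _
      rw [neg_nonpos, div_nonneg_iff]; left; exact ⟨h0, hτ.le⟩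
  have hstep5 : ∫ s, τ₁/((τ₁+τ₂)*(τ₁-τ₂)) * (τ₁ * exp (-(|s|/τ₁)) - τ₂ * exp (-(|s|/τ₂))) ∂ν
      = τ₁/((τ₁+τ₂)*(τ₁-τ₂)) * (τ₁ * (∫ s, exp (-(|s|/τ₁)) ∂ν)
        - τ₂ * (∫ s, exp (-(|s|/τ₂)) ∂ν)) := by
    rw [integral_const_mul, integral_sub ((hexpint τ₁ hτ₁).const_mul _)
      ((hexpint τ₂ hτ₂).const_mul _), integral_const_mul, integral_const_mul]
  have hback : ∀ τ : ℝ, (∫ s, exp (-(|s|/τ)) ∂ν) = ∫ ω, exp (-|S ω| / τ) ∂P := by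
    intro τ
    rw [hν, integral_map hCmeas.aemeasurable]
    · apply integral_congr_ae
      filter_upwards [hCae] with ω hω
      rw [← hω, neg_div]
    · apply Continuous.aestronglyMeasurable
      apply Real.continuous_exp.comp
      fun_prop
  rw [hstep1, hstep2, hstep3, hstep4, hstep5, hback τ₁, hback τ₂]
  have hne1 : τ₁ + τ₂ ≠ 0 := by positivity
  have hne2 : τ₁ - τ₂ ≠ 0 := sub_ne_zero.mpr h12
  field_simp
end
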